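/- arXiv:quant-ph/0511203 — 6 statements merged into one kernel-verified Lean document; each statement's English description precedes it below -/
import Mathlib

section
/- The restriction of the representation V to the subspace H₊ = {f ∈ L²(ℝ, ℂ) : f(y) = 0 for almost every y < 0} (equivalently, the representation (V_{x,r} f)(y) = e^{r/2} e^{-2ixy} f(e^{r} y) on L²((0,∞), ℂ)) is irreducible: every closed subspace of L²((0,∞), ℂ) that is invariant under V_{x,r} for all (x, r) ∈ ℝ² is either the zero subspace or the whole space. -/
open MeasureTheory Complex FourierTransform Real SchwartzMap
open scoped ContDiff ENNReal NNReal

/-- A smooth compactly supported function is a Schwartz map. -/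
noncomputable def toSchwartz (g : ℝ → ℂ) (hg : ContDiff ℝ ∞ g) (hsupp : HasCompactSupport g) :
    SchwartzMap ℝ ℂ where
  toFun := g
  smooth' := hg
  decay' := by
    intro k n
    have hcont : Continuous fun x : ℝ => ‖x‖ ^ k * ‖iteratedFDeriv ℝ n g x‖ :=
      ((continuous_pow k).comp continuous_norm).mul
        (hg.continuous_iteratedFDeriv (mod_cast le_top)).norm
    have hcs : HasCompactSupport fun x : ℝ => ‖x‖ ^ k * ‖iteratedFDeriv ℝ n g x‖ :=
      ((hsupp.iteratedFDeriv n).norm).mul_left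
    obtain ⟨C, hC⟩ := hcont.bounded_above_of_compact_support hcs
    exact ⟨C, fun x => (le_abs_self _).trans (hC x)⟩

theorem fourier_uniqueness {φ : ℝ → ℂ} (hφ : Integrable φ)
    (h : ∀ ξ : ℝ, 𝓕 φ ξ = 0) : φ =ᵐ[volume] 0 := by
  apply ae_eq_zero_of_integral_contDiff_smul_eq_zero hφ.locallyIntegrable
  intro g hg hgsupp
  set h₀ : SchwartzMap ℝ ℂ := toSchwartz (fun x => (g x : ℂ))
    (Complex.ofRealCLM.contDiff.comp hg) (hgsupp.comp_left (g := (↑· : ℝ → ℂ)) rfl)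
  set ψ : SchwartzMap ℝ ℂ := (fourierTransformCLE ℂ (SchwartzMap ℝ ℂ)).symm h₀ with hψ
  have hFψ : 𝓕 ⇑ψ = fun x => (g x : ℂ) := by
    have := congrArg (fun s : SchwartzMap ℝ ℂ => ⇑s)
      ((fourierTransformCLE ℂ (SchwartzMap ℝ ℂ)).apply_symm_apply h₀)
    exact this
  have mult := VectorFourier.integral_fourierIntegral_smul_eq_flip (μ := (volume : Measure ℝ)) (ν := (volume : Measure ℝ)) (L := innerₗ ℝ)
    Real.continuous_fourierChar continuous_inner ψ.integrable hφ
  have hRHS : ∀ x : ℝ, VectorFourier.fourierIntegral 𝐞 volume (innerₗ ℝ).flip φ x = 0 := by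
    intro x
    have : VectorFourier.fourierIntegral 𝐞 volume (innerₗ ℝ).flip φ x = 𝓕 φ x := by
      rw [Real.fourier_eq]; unfold VectorFourier.fourierIntegral
      congr 1 with v
      congr 2
      simp [LinearMap.flip_apply, real_inner_comm]
    rw [this, h]
  rw [show (VectorFourier.fourierIntegral 𝐞 volume (innerₗ ℝ) ⇑ψ) = 𝓕 ⇑ψ from rfl, hFψ] at mult
  simp only [hRHS, smul_zero, integral_zero] at mult
  simpa only [Complex.real_smul, smul_eq_mul] using mult

/-- The representation `(V_{x,r} f)(y) = e^{r/2} e^{-2ixy} f(e^r y)` of the affine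
group on `L²((0,∞), ℂ)` is irreducible: every closed invariant subspace is `⊥` or `⊤`. -/
theorem affine_rep_positive_halfline_irreducible
    (V : ℝ × ℝ →
      (Lp ℂ 2 ((volume : Measure ℝ).restrict (Set.Ioi 0)) ≃ₗᵢ[ℂ]
        Lp ℂ 2 ((volume : Measure ℝ).restrict (Set.Ioi 0))))
    (hV : ∀ (p : ℝ × ℝ) (f : Lp ℂ 2 ((volume : Measure ℝ).restrict (Set.Ioi 0))),
      ⇑(V p f) =ᵐ[(volume : Measure ℝ).restrict (Set.Ioi 0)]
        fun y => (Real.exp (p.2 / 2) : ℂ) *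
          Complex.exp (-2 * Complex.I * (p.1 : ℂ) * (y : ℂ)) * f (Real.exp p.2 * y))
    (K : Submodule ℂ (Lp ℂ 2 ((volume : Measure ℝ).restrict (Set.Ioi 0))))
    (hK : IsClosed (K : Set (Lp ℂ 2 ((volume : Measure ℝ).restrict (Set.Ioi 0)))))
    (hKinv : ∀ p : ℝ × ℝ, ∀ f ∈ K, V p f ∈ K) :
    K = ⊥ ∨ K = ⊤ := by
  classical
  by_cases hbot : K = ⊥
  · exact Or.inl hbot
  right
  haveI : CompleteSpace K := hK.completeSpace_coe
  rw [← Submodule.orthogonal_eq_bot_iff]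
  obtain ⟨f, hfK, hf0⟩ : ∃ f ∈ K, f ≠ 0 := by
    by_contra hcon
    push_neg at hcon
    exact hbot (Submodule.eq_bot_iff K |>.mpr hcon)
  rw [Submodule.eq_bot_iff]
  intro g hg
  rw [Submodule.mem_orthogonal] at hg
  -- Step A/B : key vanishing identity
  have hkey : ∀ x r : ℝ,
      ∫ y : ℝ, Complex.exp (2 * Complex.I * x * y) * ((starRingEnd ℂ) (f (Real.exp r * y)) * g y) ∂((volume : Measure ℝ).restrict (Set.Ioi (0:ℝ)))
        = 0 := by
    intro x r
    have hinner : ∫ y : ℝ, (starRingEnd ℂ) ((V (x, r) f) y) * g y ∂((volume : Measure ℝ).restrict (Set.Ioi (0:ℝ))) = 0 := by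
      have h0 := hg (V (x, r) f) (hKinv (x, r) f hfK)
      rw [L2.inner_def] at h0
      simpa only [RCLike.inner_apply, mul_comm] using h0
    have h1 : ∫ y : ℝ, (starRingEnd ℂ) ((V (x, r) f) y) * g y ∂((volume : Measure ℝ).restrict (Set.Ioi (0:ℝ)))
        = ∫ y : ℝ, (Real.exp (r / 2) : ℂ) *
            (Complex.exp (2 * Complex.I * x * y) * ((starRingEnd ℂ) (f (Real.exp r * y)) * g y)) ∂((volume : Measure ℝ).restrict (Set.Ioi (0:ℝ))) := by
      apply integral_congr_ae
      filter_upwards [hV (x, r) f] with y hy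
      rw [hy]
      simp only [map_mul, Complex.conj_ofReal, ← Complex.exp_conj, map_neg, Complex.conj_I,
        map_ofNat]
      ring_nf
    rw [h1, integral_const_mul] at hinner
    have hc : (Real.exp (r / 2) : ℂ) ≠ 0 := by
      simp [Complex.ofReal_ne_zero, Real.exp_ne_zero]
    exact (mul_eq_zero.mp hinner).resolve_left hc
  -- Step C : integrability
  have qint : ∀ r : ℝ,
      Integrable (fun y => (starRingEnd ℂ) (f (Real.exp r * y)) * g y) ((volume : Measure ℝ).restrict (Set.Ioi (0:ℝ))) := by
    intro r
    set u := V (0, r) f with hu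
    have h2 : ⇑u =ᵐ[((volume : Measure ℝ).restrict (Set.Ioi (0:ℝ)))] fun y => (Real.exp (r / 2) : ℂ) * f (Real.exp r * y) := by
      filter_upwards [hV (0, r) f] with y hy
      rw [hy]
      simp
    have base : Integrable (fun y => (starRingEnd ℂ) (u y) * g y) ((volume : Measure ℝ).restrict (Set.Ioi (0:ℝ))) := by
      have := L2.integrable_inner (𝕜 := ℂ) u g
      simpa only [RCLike.inner_apply, mul_comm] using this
    have base2 : Integrable (fun y =>
        (Real.exp (r / 2) : ℂ) * ((starRingEnd ℂ) (f (Real.exp r * y)) * g y)) ((volume : Measure ℝ).restrict (Set.Ioi (0:ℝ))) := by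
      apply base.congr
      filter_upwards [h2] with y hy
      rw [hy]
      simp only [map_mul, Complex.conj_ofReal]
      ring
    have hc : (Real.exp (r / 2) : ℂ) ≠ 0 := by
      simp [Complex.ofReal_ne_zero, Real.exp_ne_zero]
    have := base2.const_mul ((Real.exp (r / 2) : ℂ))⁻¹
    apply this.congr
    filter_upwards with y
    field_simp
  -- Step D : for each r, the product vanishes a.e.
  have qzero : ∀ r : ℝ,
      (fun y => (starRingEnd ℂ) (f (Real.exp r * y)) * g y) =ᵐ[((volume : Measure ℝ).restrict (Set.Ioi (0:ℝ)))] 0 := by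
    intro r
    set q : ℝ → ℂ := fun y => (starRingEnd ℂ) (f (Real.exp r * y)) * g y with hq
    set Φ : ℝ → ℂ := (Set.Ioi (0 : ℝ)).indicator q with hΦ
    have hΦint : Integrable Φ (volume : Measure ℝ) :=
      (integrable_indicator_iff measurableSet_Ioi).2 (qint r)
    have hΦF : ∀ ξ : ℝ, 𝓕 Φ ξ = 0 := by
      intro ξ
      rw [Real.fourier_real_eq_integral_exp_smul]
      have step1 : ∫ v : ℝ, Complex.exp ((-2 * π * v * ξ : ℝ) * Complex.I) • Φ v
          = ∫ v, Complex.exp ((-2 * π * v * ξ : ℝ) * Complex.I) • q v ∂((volume : Measure ℝ).restrict (Set.Ioi (0:ℝ))) := by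
        rw [← integral_indicator measurableSet_Ioi]
        congr 1 with v
        by_cases hv : v ∈ Set.Ioi (0 : ℝ) <;> simp [hΦ, hv]
      rw [step1, ← hkey (-(π * ξ)) r]
      congr 1 with y
      rw [smul_eq_mul]
      congr 2
      push_cast
      ring
    have hΦ0 : Φ =ᵐ[volume] 0 := fourier_uniqueness hΦint hΦF
    have h3 : ∀ᵐ v ∂((volume : Measure ℝ).restrict (Set.Ioi (0:ℝ))), Φ v = 0 := ae_restrict_of_ae hΦ0
    filter_upwards [h3, ae_restrict_mem measurableSet_Ioi] with v hv hmem
    show q v = 0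
    rw [← Set.indicator_of_mem hmem q]
    exact hv
  -- Step E : nnnorm products vanish a.e.
  have Hzero : ∀ r : ℝ, ∀ᵐ y ∂((volume : Measure ℝ).restrict (Set.Ioi (0:ℝ))),
      ((‖f (Real.exp r * y)‖₊ : ℝ≥0∞) * ‖g y‖₊) = 0 := by
    intro r
    filter_upwards [qzero r] with y hy
    rw [Pi.zero_apply] at hy
    rcases mul_eq_zero.mp hy with h | h
    · have : f (Real.exp r * y) = 0 := by simpa using h
      simp [this]
    · simp [h]
  -- Step F : measurability
  have hfm : StronglyMeasurable ⇑f := Lp.stronglyMeasurable f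
  have hgm : StronglyMeasurable ⇑g := Lp.stronglyMeasurable g
  set Hfun : ℝ × ℝ → ℝ≥0∞ :=
    fun p => ((‖f (Real.exp p.1 * p.2)‖₊ : ℝ≥0∞) * ‖g p.2‖₊) with hHfun
  have Hm : Measurable Hfun := by
    apply Measurable.fun_mul
    · exact (hfm.measurable.comp
        ((Real.measurable_exp.comp measurable_fst).mul measurable_snd)).nnnorm.coe_nnreal_ennreal
    · exact (hgm.measurable.comp measurable_snd).nnnorm.coe_nnreal_ennreal
  -- Step G : Tonelli
  have hA1 : ∫⁻ p, Hfun p ∂((volume : Measure ℝ).prod ((volume : Measure ℝ).restrict (Set.Ioi (0:ℝ)))) = 0 := by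
    rw [lintegral_prod _ Hm.aemeasurable]
    have hz : ∀ r : ℝ, ∫⁻ y, Hfun (r, y) ∂((volume : Measure ℝ).restrict (Set.Ioi (0:ℝ))) = 0 := by
      intro r
      rw [show (0 : ℝ≥0∞) = ∫⁻ _, 0 ∂((volume : Measure ℝ).restrict (Set.Ioi (0:ℝ))) from (lintegral_zero).symm]
      apply lintegral_congr_ae
      filter_upwards [Hzero r] with y hy
      exact hy
    simp only [hz, lintegral_zero]
  have hA2 : ∫⁻ y, (∫⁻ r, Hfun (r, y) ∂(volume : Measure ℝ)) ∂((volume : Measure ℝ).restrict (Set.Ioi (0:ℝ))) = 0 := by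
    rw [← lintegral_prod_symm _ Hm.aemeasurable]
    exact hA1
  -- the constant C
  set C : ℝ≥0∞ := ∫⁻ t, (‖f (Real.exp t)‖₊ : ℝ≥0∞) ∂(volume : Measure ℝ) with hCdef
  have hconst : ∀ y : ℝ, 0 < y →
      ∫⁻ r, (‖f (Real.exp r * y)‖₊ : ℝ≥0∞) ∂(volume : Measure ℝ) = C := by
    intro y hy
    have hrw : ∀ r : ℝ, Real.exp r * y = Real.exp (r + Real.log y) := by
      intro r; rw [Real.exp_add, Real.exp_log hy]
    simp_rw [hrw]
    exact lintegral_add_right_eq_self (fun t => (‖f (Real.exp t)‖₊ : ℝ≥0∞)) (Real.log y)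
  have hCpos : C ≠ 0 := by
    intro hC0
    apply hf0
    have hmeas1 : Measurable fun t : ℝ => (‖f (Real.exp t)‖₊ : ℝ≥0∞) :=
      (hfm.measurable.comp Real.measurable_exp).nnnorm.coe_nnreal_ennreal
    have hae : ∀ᵐ t ∂(volume : Measure ℝ), (‖f (Real.exp t)‖₊ : ℝ≥0∞) = 0 :=
      (lintegral_eq_zero_iff hmeas1).mp hC0
    have h1 : ∀ x ∈ (Set.univ : Set ℝ), HasFDerivWithinAt Real.exp
        ((1 : ℝ →L[ℝ] ℝ).smulRight (Real.exp x)) Set.univ x := fun x _ =>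
      (Real.hasDerivAt_exp x).hasFDerivAt.hasFDerivWithinAt
    have hchg := lintegral_image_eq_lintegral_abs_det_fderiv_mul (volume : Measure ℝ)
      MeasurableSet.univ h1 (Real.exp_injective.injOn) (fun t => (‖f t‖₊ : ℝ≥0∞))
    rw [Set.image_univ, Real.range_exp] at hchg
    have hz : ∫⁻ t in Set.Ioi (0 : ℝ), (‖f t‖₊ : ℝ≥0∞) ∂volume = 0 := by
      rw [hchg, Measure.restrict_univ]
      rw [show (0 : ℝ≥0∞) = ∫⁻ _, 0 ∂(volume : Measure ℝ) from (lintegral_zero).symm]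
      apply lintegral_congr_ae
      filter_upwards [hae] with r hr
      rw [hr, mul_zero]
    have hfae : ⇑f =ᵐ[((volume : Measure ℝ).restrict (Set.Ioi (0:ℝ)))] 0 := by
      have hmeas2 : Measurable fun t : ℝ => (‖f t‖₊ : ℝ≥0∞) :=
        hfm.measurable.nnnorm.coe_nnreal_ennreal
      have := (lintegral_eq_zero_iff hmeas2).mp hz
      filter_upwards [this] with t ht
      simpa using ht
    exact Lp.eq_zero_iff_ae_eq_zero.mpr hfae
  -- conclude g = 0 a.e.
  have hmeas3 : Measurable fun y : ℝ => ∫⁻ r, Hfun (r, y) ∂(volume : Measure ℝ) :=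
    Measurable.lintegral_prod_left Hm
  have h4 : ∀ᵐ y ∂((volume : Measure ℝ).restrict (Set.Ioi (0:ℝ))), ∫⁻ r, Hfun (r, y) ∂(volume : Measure ℝ) = 0 :=
    (lintegral_eq_zero_iff hmeas3).mp hA2
  have hg0 : ⇑g =ᵐ[((volume : Measure ℝ).restrict (Set.Ioi (0:ℝ)))] 0 := by
    filter_upwards [h4, ae_restrict_mem measurableSet_Ioi] with y hy hmem
    have hint : ∫⁻ r, Hfun (r, y) ∂(volume : Measure ℝ)
        = C * (‖g y‖₊ : ℝ≥0∞) := by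
      rw [hHfun]
      simp only
      rw [lintegral_mul_const' _ _ (by simp : ((‖g y‖₊ : ℝ≥0∞)) ≠ ⊤)]
      rw [hconst y hmem, mul_comm]
    rw [hint] at hy
    rcases mul_eq_zero.mp hy with h | h
    · exact absurd h hCpos
    · simpa using h
  exact Lp.eq_zero_iff_ae_eq_zero.mpr hg0
end

section
/- Let ψ ∈ L²((0,∞), ℂ) be a unit vector with N₁ := ∫₀^∞ y |ψ(y)|² dy < ∞. Then for every η ∈ L²((0,∞), ℂ) satisfying π ∫₀^∞ |η(y)|² y^{-1} dy ≤ 1, one has |⟨η, ψ⟩|² ≤ N₁/π. Moreover, if N₁ > 0, equality is attained by η(y) = y ψ(y) / √(π N₁), which satisfies π ∫₀^∞ |η(y)|² y^{-1} dy = 1. (This is the maximum-likelihood value L^{opt} = ⟨ψ| D₊^{-1} |ψ⟩ for a single irreducible sector, with D₊^{-1} = Y/π.) -/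
open MeasureTheory

/-- Maximum-likelihood bound for a single irreducible sector of the affine group:
if `ψ ∈ L²((0,∞), ℂ)` is a unit vector with `N₁ = ∫₀^∞ y |ψ(y)|² dy < ∞`, then any
POVM seed `η` with `π ∫₀^∞ |η(y)|² y⁻¹ dy ≤ 1` has likelihood `|⟨η, ψ⟩|² ≤ N₁/π`,
and (for `N₁ > 0`) the bound is attained by `η(y) = y ψ(y)/√(π N₁)`, which satisfies
the normalization with equality. -/
theorem maximum_likelihood_single_sector
    (ψ : Lp ℂ 2 ((volume : Measure ℝ).restrict (Set.Ioi 0))) (hψ : ‖ψ‖ = 1)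
    (N₁ : ℝ) (hN₁ : N₁ = ∫ y in Set.Ioi (0 : ℝ), y * ‖ψ y‖ ^ 2)
    (hN₁fin : Integrable (fun y => y * ‖ψ y‖ ^ 2) ((volume : Measure ℝ).restrict (Set.Ioi 0))) :
    (∀ η : Lp ℂ 2 ((volume : Measure ℝ).restrict (Set.Ioi 0)),
      Integrable (fun y => ‖η y‖ ^ 2 / y) ((volume : Measure ℝ).restrict (Set.Ioi 0)) →
      Real.pi * (∫ y in Set.Ioi (0 : ℝ), ‖η y‖ ^ 2 / y) ≤ 1 →
      ‖(inner ℂ η ψ : ℂ)‖ ^ 2 ≤ N₁ / Real.pi) ∧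
    (0 < N₁ →
      Real.pi * (∫ y in Set.Ioi (0 : ℝ),
          ‖(y : ℂ) * ψ y / (Real.sqrt (Real.pi * N₁) : ℂ)‖ ^ 2 / y) = 1 ∧
      ‖∫ y in Set.Ioi (0 : ℝ),
          (starRingEnd ℂ) ((y : ℂ) * ψ y / (Real.sqrt (Real.pi * N₁) : ℂ)) * ψ y‖ ^ 2 =
        N₁ / Real.pi) := by
  have hae : ∀ᵐ y ∂((volume : Measure ℝ).restrict (Set.Ioi 0)), y ∈ Set.Ioi (0 : ℝ) :=
    ae_restrict_mem measurableSet_Ioi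
  have hπ : (0 : ℝ) < Real.pi := Real.pi_pos
  have hN₁nonneg : 0 ≤ N₁ := by
    rw [hN₁]
    refine integral_nonneg_of_ae ?_
    filter_upwards [hae] with y hy
    exact mul_nonneg (le_of_lt hy) (sq_nonneg _)
  constructor
  · intro η hηint hηnorm
    set f : ℝ → ℝ := fun y => ‖η y‖ / Real.sqrt y with hf
    set g : ℝ → ℝ := fun y => Real.sqrt y * ‖ψ y‖ with hg
    have hfm : AEStronglyMeasurable f ((volume : Measure ℝ).restrict (Set.Ioi 0)) :=
      ((Lp.aestronglyMeasurable η).norm.aemeasurable.div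
        Real.continuous_sqrt.measurable.aemeasurable).aestronglyMeasurable
    have hgm : AEStronglyMeasurable g ((volume : Measure ℝ).restrict (Set.Ioi 0)) :=
      (Real.continuous_sqrt.measurable.aemeasurable.mul
        (Lp.aestronglyMeasurable ψ).norm.aemeasurable).aestronglyMeasurable
    have hfsq : (fun y => f y ^ 2) =ᵐ[(volume : Measure ℝ).restrict (Set.Ioi 0)]
        fun y => ‖η y‖ ^ 2 / y := by
      filter_upwards [hae] with y hy
      have hsy : Real.sqrt y ^ 2 = y := Real.sq_sqrt (le_of_lt hy)
      simp only [hf, div_pow, hsy]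
    have hgsq : (fun y => g y ^ 2) =ᵐ[(volume : Measure ℝ).restrict (Set.Ioi 0)]
        fun y => y * ‖ψ y‖ ^ 2 := by
      filter_upwards [hae] with y hy
      have hsy : Real.sqrt y ^ 2 = y := Real.sq_sqrt (le_of_lt hy)
      simp only [hg, mul_pow, hsy]
    have hfint : Integrable (fun y => f y ^ 2) ((volume : Measure ℝ).restrict (Set.Ioi 0)) :=
      hηint.congr hfsq.symm
    have hgint : Integrable (fun y => g y ^ 2) ((volume : Measure ℝ).restrict (Set.Ioi 0)) :=
      hN₁fin.congr hgsq.symm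
    have h2 : ENNReal.ofReal (2 : ℝ) = 2 := by norm_num
    have hfmem : MemLp f (ENNReal.ofReal (2 : ℝ)) ((volume : Measure ℝ).restrict (Set.Ioi 0)) := by
      rw [h2]; exact (memLp_two_iff_integrable_sq hfm).mpr hfint
    have hgmem : MemLp g (ENNReal.ofReal (2 : ℝ)) ((volume : Measure ℝ).restrict (Set.Ioi 0)) := by
      rw [h2]; exact (memLp_two_iff_integrable_sq hgm).mpr hgint
    have hconj : Real.HolderConjugate 2 2 := by constructor <;> norm_num
    have hCS := integral_mul_le_Lp_mul_Lq_of_nonneg hconj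
      (Filter.Eventually.of_forall fun y => by positivity : 0 ≤ᵐ[(volume : Measure ℝ).restrict (Set.Ioi 0)] f)
      (Filter.Eventually.of_forall fun y => by positivity : 0 ≤ᵐ[(volume : Measure ℝ).restrict (Set.Ioi 0)] g)
      hfmem hgmem
    have hpow2 : ∀ h : ℝ → ℝ,
        (∫ y in Set.Ioi (0 : ℝ), h y ^ (2 : ℝ)) = ∫ y in Set.Ioi (0 : ℝ), h y ^ 2 := by
      intro h
      refine integral_congr_ae ?_
      filter_upwards with y
      rw [show ((2 : ℝ)) = ((2 : ℕ) : ℝ) by norm_num, Real.rpow_natCast]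
    rw [hpow2 f, hpow2 g] at hCS
    have hinner : ‖(inner ℂ η ψ : ℂ)‖ ≤ ∫ y in Set.Ioi (0 : ℝ), f y * g y := by
      rw [MeasureTheory.L2.inner_def]
      refine le_trans (norm_integral_le_integral_norm _) (le_of_eq ?_)
      refine integral_congr_ae ?_
      filter_upwards [hae] with y hy
      have hsy : Real.sqrt y ≠ 0 := (Real.sqrt_pos.mpr hy).ne'
      have hn : ‖(inner ℂ (η y) (ψ y) : ℂ)‖ = ‖η y‖ * ‖ψ y‖ := by
        rw [RCLike.inner_apply', norm_mul, RCLike.norm_conj]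
      rw [hn, hf, hg]
      field_simp
    have hIf : (∫ y in Set.Ioi (0 : ℝ), f y ^ 2) ≤ 1 / Real.pi := by
      have h1 : (∫ y in Set.Ioi (0 : ℝ), f y ^ 2) = ∫ y in Set.Ioi (0 : ℝ), ‖η y‖ ^ 2 / y :=
        integral_congr_ae hfsq
      rw [h1, le_div_iff₀ hπ]
      linarith
    have hIg : (∫ y in Set.Ioi (0 : ℝ), g y ^ 2) = N₁ := by
      rw [hN₁]; exact integral_congr_ae hgsq
    have hfnonneg : 0 ≤ ∫ y in Set.Ioi (0 : ℝ), f y ^ 2 :=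
      integral_nonneg fun y => sq_nonneg _
    have hfgnonneg : 0 ≤ ∫ y in Set.Ioi (0 : ℝ), f y * g y := by
      refine integral_nonneg fun y => ?_
      have h1 : 0 ≤ f y := by positivity
      have h2 : 0 ≤ g y := by positivity
      positivity
    have hABnonneg : 0 ≤ (∫ y in Set.Ioi (0 : ℝ), f y ^ 2) * ∫ y in Set.Ioi (0 : ℝ), g y ^ 2 := by
      apply mul_nonneg hfnonneg; rw [hIg]; exact hN₁nonneg
    have hrw : (∫ y in Set.Ioi (0 : ℝ), f y ^ 2) ^ ((1 : ℝ)/2) *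
        (∫ y in Set.Ioi (0 : ℝ), g y ^ 2) ^ ((1 : ℝ)/2) =
        ((∫ y in Set.Ioi (0 : ℝ), f y ^ 2) * ∫ y in Set.Ioi (0 : ℝ), g y ^ 2) ^ ((1 : ℝ)/2) := by
      rw [← Real.mul_rpow hfnonneg (by rw [hIg]; exact hN₁nonneg)]
    rw [hrw] at hCS
    have hsq : ‖(inner ℂ η ψ : ℂ)‖ ^ 2 ≤
        (∫ y in Set.Ioi (0 : ℝ), f y ^ 2) * ∫ y in Set.Ioi (0 : ℝ), g y ^ 2 := by
      have hstep : ‖(inner ℂ η ψ : ℂ)‖ ^ 2 ≤ (∫ y in Set.Ioi (0 : ℝ), f y * g y) ^ 2 := by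
        nlinarith [norm_nonneg (inner ℂ η ψ : ℂ), hinner]
      refine le_trans hstep ?_
      calc (∫ y in Set.Ioi (0 : ℝ), f y * g y) ^ 2
          ≤ (((∫ y in Set.Ioi (0 : ℝ), f y ^ 2) * ∫ y in Set.Ioi (0 : ℝ), g y ^ 2)
              ^ ((1 : ℝ)/2)) ^ 2 :=
            pow_le_pow_left₀ hfgnonneg hCS 2
        _ = (∫ y in Set.Ioi (0 : ℝ), f y ^ 2) * ∫ y in Set.Ioi (0 : ℝ), g y ^ 2 := by
            rw [← Real.rpow_natCast (((∫ y in Set.Ioi (0 : ℝ), f y ^ 2) *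
              ∫ y in Set.Ioi (0 : ℝ), g y ^ 2) ^ ((1 : ℝ)/2)) 2,
              ← Real.rpow_mul hABnonneg]
            norm_num
    calc ‖(inner ℂ η ψ : ℂ)‖ ^ 2
        ≤ (∫ y in Set.Ioi (0 : ℝ), f y ^ 2) * ∫ y in Set.Ioi (0 : ℝ), g y ^ 2 := hsq
      _ ≤ (1 / Real.pi) * N₁ := by
          rw [hIg]
          exact mul_le_mul_of_nonneg_right hIf hN₁nonneg
      _ = N₁ / Real.pi := by ring
  · intro hN₁pos
    have hπN : (0 : ℝ) < Real.pi * N₁ := mul_pos hπ hN₁pos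
    have hs : Real.sqrt (Real.pi * N₁) ^ 2 = Real.pi * N₁ := Real.sq_sqrt hπN.le
    have hs0 : Real.sqrt (Real.pi * N₁) ≠ 0 := by positivity
    have hconjsq : ∀ z : ℂ, (starRingEnd ℂ) z * z = ((‖z‖ ^ 2 : ℝ) : ℂ) := by
      intro z
      rw [mul_comm, Complex.mul_conj]
      norm_cast
      rw [Complex.normSq_eq_norm_sq]
    constructor
    · have hcongr : (fun y => ‖(y : ℂ) * ψ y / (Real.sqrt (Real.pi * N₁) : ℂ)‖ ^ 2 / y)
          =ᵐ[(volume : Measure ℝ).restrict (Set.Ioi 0)]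
          fun y => (y * ‖ψ y‖ ^ 2) / (Real.pi * N₁) := by
        filter_upwards [hae] with y hy
        rw [norm_div, norm_mul, div_pow, mul_pow]
        have h1 : ‖(y : ℂ)‖ = y := by
          rw [Complex.norm_real, Real.norm_of_nonneg hy.le]
        have h2 : ‖((Real.sqrt (Real.pi * N₁) : ℝ) : ℂ)‖ = Real.sqrt (Real.pi * N₁) := by
          rw [Complex.norm_real, Real.norm_of_nonneg (Real.sqrt_nonneg _)]
        rw [h1, h2, hs]
        have hy0 : y ≠ 0 := ne_of_gt hy
        field_simp
      rw [integral_congr_ae hcongr, integral_div, ← hN₁]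
      field_simp
    · have hcongr : (fun y => (starRingEnd ℂ)
            ((y : ℂ) * ψ y / (Real.sqrt (Real.pi * N₁) : ℂ)) * ψ y)
          =ᵐ[(volume : Measure ℝ).restrict (Set.Ioi 0)]
          fun y => (((y * ‖ψ y‖ ^ 2) / Real.sqrt (Real.pi * N₁) : ℝ) : ℂ) := by
        filter_upwards [hae] with y hy
        rw [map_div₀, map_mul, Complex.conj_ofReal, Complex.conj_ofReal,
          div_mul_eq_mul_div, mul_assoc, hconjsq (ψ y)]
        push_cast
        ring
      have h1 : (∫ y in Set.Ioi (0 : ℝ),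
          (((y * ‖ψ y‖ ^ 2) / Real.sqrt (Real.pi * N₁) : ℝ) : ℂ)) =
          (((∫ y in Set.Ioi (0 : ℝ), (y * ‖ψ y‖ ^ 2) / Real.sqrt (Real.pi * N₁)) : ℝ) : ℂ) :=
        integral_ofReal
      rw [integral_congr_ae hcongr, h1, integral_div, ← hN₁,
        Complex.norm_real, Real.norm_of_nonneg (by positivity), div_pow, hs]
      field_simp
end

section
/- Let ψ ∈ L²(ℝ, ℂ) be a unit vector with ∫_ℝ |y| |ψ(y)|² dy < ∞, and set A₊ = ∫₀^∞ y |ψ(y)|² dy and A₋ = ∫_{-∞}^0 |y| |ψ(y)|² dy. Then for every η ∈ L²(ℝ, ℂ) satisfying both π ∫₀^∞ |η(y)|² y^{-1} dy ≤ 1 and π ∫_{-∞}^0 |η(y)|² |y|^{-1} dy ≤ 1, one has |⟨η, ψ⟩|² ≤ (1/π)(√A₊ + √A₋)². Moreover, if A₊ > 0 and A₋ > 0, equality is attained by the vector η(y) = |y| ψ(y) / √(π A₊) for y > 0 and η(y) = |y| ψ(y) / √(π A₋) for y < 0. (This is the optimal likelihood L^{opt} = (√⟨ψ| |Y|θ(Y)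 |ψ⟩ + √⟨ψ| |Y|θ(−Y) |ψ⟩)²/π for the joint estimation of real squeezing and displacement.) -/
open MeasureTheory

-- helper: Cauchy-Schwarz
lemma holder_half (μ : Measure ℝ) (f g : ℝ → ℝ)
    (hf0 : 0 ≤ᵐ[μ] f) (hg0 : 0 ≤ᵐ[μ] g)
    (hf : MemLp f 2 μ) (hg : MemLp g 2 μ) :
    ∫ a, f a * g a ∂μ ≤ Real.sqrt (∫ a, f a ^ 2 ∂μ) * Real.sqrt (∫ a, g a ^ 2 ∂μ) := by
  have hpq : Real.HolderConjugate 2 2 := ⟨by norm_num, by norm_num, by norm_num⟩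
  have h2 : (ENNReal.ofReal (2:ℝ)) = 2 := by norm_num [ENNReal.ofReal_ofNat]
  have := integral_mul_le_Lp_mul_Lq_of_nonneg hpq hf0 hg0 (by rw [h2]; exact hf) (by rw [h2]; exact hg)
  calc ∫ a, f a * g a ∂μ ≤ (∫ a, f a ^ (2:ℝ) ∂μ) ^ (1/(2:ℝ)) * (∫ a, g a ^ (2:ℝ) ∂μ) ^ (1/(2:ℝ)) := this
    _ = Real.sqrt (∫ a, f a ^ 2 ∂μ) * Real.sqrt (∫ a, g a ^ 2 ∂μ) := by
        rw [Real.sqrt_eq_rpow, Real.sqrt_eq_rpow]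
        norm_num [Real.rpow_natCast]

lemma side_bound (μ : Measure ℝ) (w : ℝ → ℝ) (hwm : Measurable w) (η ψ : ℝ → ℂ)
    (hη : AEStronglyMeasurable η μ) (hψm : AEStronglyMeasurable ψ μ)
    (hw : ∀ᵐ y ∂μ, 0 < w y)
    (h1 : Integrable (fun y => ‖η y‖ ^ 2 / w y) μ)
    (h2 : Integrable (fun y => w y * ‖ψ y‖ ^ 2) μ) :
    ∫ y, ‖η y‖ * ‖ψ y‖ ∂μ ≤
      Real.sqrt (∫ y, ‖η y‖ ^ 2 / w y ∂μ) * Real.sqrt (∫ y, w y * ‖ψ y‖ ^ 2 ∂μ) := by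
  set f : ℝ → ℝ := fun y => ‖η y‖ / Real.sqrt (w y) with hf
  set g : ℝ → ℝ := fun y => Real.sqrt (w y) * ‖ψ y‖ with hg
  have hsq : ∀ᵐ y ∂μ, Real.sqrt (w y) ^ 2 = w y ∧ Real.sqrt (w y) ≠ 0 := by
    filter_upwards [hw] with y hy
    exact ⟨Real.sq_sqrt hy.le, ne_of_gt (Real.sqrt_pos.2 hy)⟩
  have hfg : (fun y => f y * g y) =ᵐ[μ] fun y => ‖η y‖ * ‖ψ y‖ := by
    filter_upwards [hsq] with y ⟨h1', h2'⟩
    simp only [hf, hg]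
    rw [← mul_assoc, div_mul_cancel₀ _ h2']
  have hf2 : (fun y => f y ^ 2) =ᵐ[μ] fun y => ‖η y‖ ^ 2 / w y := by
    filter_upwards [hsq] with y ⟨h1', h2'⟩
    simp only [hf, div_pow, h1']
  have hg2 : (fun y => g y ^ 2) =ᵐ[μ] fun y => w y * ‖ψ y‖ ^ 2 := by
    filter_upwards [hsq] with y ⟨h1', h2'⟩
    simp only [hg, mul_pow, h1']
  have hfm : AEStronglyMeasurable f μ :=
    (hη.norm.aemeasurable.div (Real.continuous_sqrt.measurable.comp hwm).aemeasurable).aestronglyMeasurable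
  have hgm : AEStronglyMeasurable g μ :=
    ((Real.continuous_sqrt.measurable.comp hwm).aemeasurable.mul hψm.norm.aemeasurable).aestronglyMeasurable
  have hfL : MemLp f 2 μ := (memLp_two_iff_integrable_sq hfm).2 (h1.congr hf2.symm)
  have hgL : MemLp g 2 μ := (memLp_two_iff_integrable_sq hgm).2 (h2.congr hg2.symm)
  have hf0 : 0 ≤ᵐ[μ] f := Filter.Eventually.of_forall fun y => div_nonneg (norm_nonneg _) (Real.sqrt_nonneg _)
  have hg0 : 0 ≤ᵐ[μ] g := Filter.Eventually.of_forall fun y => mul_nonneg (Real.sqrt_nonneg _) (norm_nonneg _)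
  calc ∫ y, ‖η y‖ * ‖ψ y‖ ∂μ = ∫ y, f y * g y ∂μ := (integral_congr_ae hfg).symm
    _ ≤ Real.sqrt (∫ y, f y ^ 2 ∂μ) * Real.sqrt (∫ y, g y ^ 2 ∂μ) :=
        holder_half μ f g hf0 hg0 hfL hgL
    _ = _ := by rw [integral_congr_ae hf2, integral_congr_ae hg2]


/-- Optimal likelihood for joint estimation of real squeezing and displacement:
for a unit vector `ψ ∈ L²(ℝ, ℂ)` with `∫ |y||ψ(y)|² dy < ∞`, set
`A₊ = ∫₀^∞ y|ψ|² dy` and `A₋ = ∫_{-∞}^0 |y||ψ|² dy`. Every seed `η` satisfying the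
covariant-POVM normalization constraints `π ∫₀^∞ |η|²/y ≤ 1` and `π ∫_{-∞}^0 |η|²/|y| ≤ 1`
has likelihood `|⟨η, ψ⟩|² ≤ (√A₊ + √A₋)²/π`, and for `A₊, A₋ > 0` the bound is attained
by `η(y) = |y| ψ(y)/√(π A₊)` on `y > 0` and `η(y) = |y| ψ(y)/√(π A₋)` on `y < 0`. -/
theorem maximum_likelihood_squeezing_displacement
    (ψ : Lp ℂ 2 (volume : Measure ℝ)) (hψ : ‖ψ‖ = 1)
    (hint : Integrable (fun y => |y| * ‖ψ y‖ ^ 2) (volume : Measure ℝ))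
    (Apos Aneg : ℝ)
    (hApos : Apos = ∫ y in Set.Ioi (0 : ℝ), y * ‖ψ y‖ ^ 2)
    (hAneg : Aneg = ∫ y in Set.Iio (0 : ℝ), |y| * ‖ψ y‖ ^ 2) :
    (∀ η : Lp ℂ 2 (volume : Measure ℝ),
      IntegrableOn (fun y => ‖η y‖ ^ 2 / y) (Set.Ioi 0) (volume : Measure ℝ) →
      IntegrableOn (fun y => ‖η y‖ ^ 2 / |y|) (Set.Iio 0) (volume : Measure ℝ) →
      Real.pi * (∫ y in Set.Ioi (0 : ℝ), ‖η y‖ ^ 2 / y) ≤ 1 →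
      Real.pi * (∫ y in Set.Iio (0 : ℝ), ‖η y‖ ^ 2 / |y|) ≤ 1 →
      ‖(inner ℂ η ψ : ℂ)‖ ^ 2 ≤ (Real.sqrt Apos + Real.sqrt Aneg) ^ 2 / Real.pi) ∧
    (0 < Apos → 0 < Aneg →
      ∀ η₀ : ℝ → ℂ,
        (η₀ = fun y : ℝ => if 0 < y then ((|y| : ℝ) : ℂ) * ψ y / (Real.sqrt (Real.pi * Apos) : ℂ)
          else ((|y| : ℝ) : ℂ) * ψ y / (Real.sqrt (Real.pi * Aneg) : ℂ)) →
        Real.pi * (∫ y in Set.Ioi (0 : ℝ), ‖η₀ y‖ ^ 2 / y) = 1 ∧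
        Real.pi * (∫ y in Set.Iio (0 : ℝ), ‖η₀ y‖ ^ 2 / |y|) = 1 ∧
        ‖∫ y, (starRingEnd ℂ) (η₀ y) * ψ y ∂(volume : Measure ℝ)‖ ^ 2 =
          (Real.sqrt Apos + Real.sqrt Aneg) ^ 2 / Real.pi) := by
  constructor
  · intro η h1 h2 h3 h4
    have hπ := Real.pi_pos
    have hinner : Integrable (fun y => (inner ℂ (η y) (ψ y) : ℂ)) volume := L2.integrable_inner η ψ
    have hnormprod : Integrable (fun y => ‖η y‖ * ‖ψ y‖) volume := by
      refine hinner.norm.congr (Filter.Eventually.of_forall fun y => ?_)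
      simp [RCLike.inner_apply, norm_mul, RCLike.norm_conj, mul_comm]
    have hsplit : ∫ y, ‖η y‖ * ‖ψ y‖ =
        (∫ y in Set.Iio (0:ℝ), ‖η y‖ * ‖ψ y‖) + ∫ y in Set.Ioi (0:ℝ), ‖η y‖ * ‖ψ y‖ := by
      rw [← integral_add_compl measurableSet_Iio hnormprod, Set.compl_Iio,
        integral_Ici_eq_integral_Ioi]
    -- positive side
    have hwp : ∀ᵐ y ∂(volume.restrict (Set.Ioi (0:ℝ))), 0 < y :=
      (ae_restrict_iff' measurableSet_Ioi).2 (Filter.Eventually.of_forall fun y hy => hy)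
    have h2p : Integrable (fun y => y * ‖ψ y‖ ^ 2) (volume.restrict (Set.Ioi (0:ℝ))) := by
      refine hint.integrableOn.congr ((ae_restrict_iff' measurableSet_Ioi).2
        (Filter.Eventually.of_forall fun y hy => ?_))
      simp only []
      simp only [abs_of_pos (show (0:ℝ) < y from hy)]
    have Bp := side_bound (volume.restrict (Set.Ioi (0:ℝ))) (fun y => y) measurable_id
      (⇑η) (⇑ψ) ((Lp.aestronglyMeasurable η).restrict) ((Lp.aestronglyMeasurable ψ).restrict)
      hwp h1 h2p
    have hIp : (∫ y in Set.Ioi (0:ℝ), ‖η y‖ ^ 2 / y) ≤ 1 / Real.pi := by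
      rw [le_div_iff₀ hπ]; linarith
    have boundp : ∫ y in Set.Ioi (0:ℝ), ‖η y‖ * ‖ψ y‖ ≤ Real.sqrt (1/Real.pi) * Real.sqrt Apos := by
      refine le_trans Bp ?_
      rw [hApos]
      exact mul_le_mul_of_nonneg_right (Real.sqrt_le_sqrt hIp) (Real.sqrt_nonneg _)
    -- negative side
    have hwn : ∀ᵐ y ∂(volume.restrict (Set.Iio (0:ℝ))), 0 < |y| :=
      (ae_restrict_iff' measurableSet_Iio).2
        (Filter.Eventually.of_forall fun y hy => abs_pos.2 (ne_of_lt hy))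
    have Bn := side_bound (volume.restrict (Set.Iio (0:ℝ))) (fun y => |y|) measurable_abs
      (⇑η) (⇑ψ) ((Lp.aestronglyMeasurable η).restrict) ((Lp.aestronglyMeasurable ψ).restrict)
      hwn h2 hint.integrableOn
    have hIn : (∫ y in Set.Iio (0:ℝ), ‖η y‖ ^ 2 / |y|) ≤ 1 / Real.pi := by
      rw [le_div_iff₀ hπ]; linarith
    have boundn : ∫ y in Set.Iio (0:ℝ), ‖η y‖ * ‖ψ y‖ ≤ Real.sqrt (1/Real.pi) * Real.sqrt Aneg := by
      refine le_trans Bn ?_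
      rw [hAneg]
      exact mul_le_mul_of_nonneg_right (Real.sqrt_le_sqrt hIn) (Real.sqrt_nonneg _)
    have hnorm : ‖(inner ℂ η ψ : ℂ)‖ ≤ ∫ y, ‖η y‖ * ‖ψ y‖ := by
      rw [L2.inner_def]
      refine le_trans (norm_integral_le_integral_norm _) (le_of_eq (integral_congr_ae
        (Filter.Eventually.of_forall fun y => ?_)))
      simp [RCLike.inner_apply, norm_mul, RCLike.norm_conj, mul_comm]
    have htot : ‖(inner ℂ η ψ : ℂ)‖ ≤ Real.sqrt (1/Real.pi) * (Real.sqrt Apos + Real.sqrt Aneg) := by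
      rw [mul_add]
      calc ‖(inner ℂ η ψ : ℂ)‖ ≤ ∫ y, ‖η y‖ * ‖ψ y‖ := hnorm
        _ = _ + _ := hsplit
        _ ≤ _ := add_le_add boundn boundp |>.trans (le_of_eq (add_comm _ _))
    have hsq := pow_le_pow_left₀ (norm_nonneg _) htot 2
    refine hsq.trans (le_of_eq ?_)
    rw [mul_pow, Real.sq_sqrt (by positivity : (0:ℝ) ≤ 1/Real.pi)]
    ring
  · intro hAp hAn η₀ hη₀
    have hπ := Real.pi_pos
    set cp := Real.sqrt (Real.pi * Apos) with hcp
    set cn := Real.sqrt (Real.pi * Aneg) with hcn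
    have hcp0 : 0 < cp := Real.sqrt_pos.2 (by positivity)
    have hcn0 : 0 < cn := Real.sqrt_pos.2 (by positivity)
    have hcp2 : cp ^ 2 = Real.pi * Apos := Real.sq_sqrt (by positivity)
    have hcn2 : cn ^ 2 = Real.pi * Aneg := Real.sq_sqrt (by positivity)
    have hnp : ∀ y ∈ Set.Ioi (0:ℝ), ‖η₀ y‖ ^ 2 / y = (y * ‖ψ y‖ ^ 2) * (Real.pi * Apos)⁻¹ := by
      intro y hy
      have hy' : (0:ℝ) < y := hy
      rw [hη₀]
      simp only [if_pos hy', norm_div, norm_mul, Complex.norm_real, abs_of_pos hy',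
        abs_of_pos hcp0]
      rw [div_pow, ← hcp2]
      field_simp
      rw [Real.norm_eq_abs, Real.norm_eq_abs, sq_abs, abs_of_pos hcp0, mul_div_assoc,
        div_self (pow_pos hcp0 2).ne', mul_one]
      ring
    have hnn : ∀ y ∈ Set.Iio (0:ℝ), ‖η₀ y‖ ^ 2 / |y| = (|y| * ‖ψ y‖ ^ 2) * (Real.pi * Aneg)⁻¹ := by
      intro y hy
      have hy' : y < 0 := hy
      have hay : (0:ℝ) < |y| := abs_pos.2 (ne_of_lt hy')
      rw [hη₀]
      simp only [if_neg (not_lt.2 hy'.le), norm_div, norm_mul, Complex.norm_real,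
        abs_of_pos hcn0, abs_abs]
      rw [div_pow, ← hcn2]
      field_simp
      rw [Real.norm_eq_abs, Real.norm_eq_abs, abs_abs, abs_of_pos hcn0, mul_div_assoc,
        div_self (pow_pos hcn0 2).ne', mul_one]
      ring
    refine ⟨?_, ?_, ?_⟩
    · rw [setIntegral_congr_fun measurableSet_Ioi hnp, integral_mul_const, ← hApos]
      field_simp
    · rw [setIntegral_congr_fun measurableSet_Iio hnn, integral_mul_const, ← hAneg]
      field_simp
    · set F : ℝ → ℂ := fun y => if 0 < y then ((|y| * ‖ψ y‖ ^ 2 / cp : ℝ) : ℂ)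
        else ((|y| * ‖ψ y‖ ^ 2 / cn : ℝ) : ℂ) with hF
      have hψm : Measurable (⇑ψ : ℝ → ℂ) := (Lp.stronglyMeasurable ψ).measurable
      have hmc : ∀ y : ℝ, (ψ y) * (starRingEnd ℂ) (ψ y) = ((‖ψ y‖ ^ 2 : ℝ) : ℂ) := by
        intro y; rw [RCLike.mul_conj]; norm_cast
      have hptwise : (fun y => (starRingEnd ℂ) (η₀ y) * ψ y) = F := by
        funext y
        by_cases hy : 0 < y
        · rw [hη₀]
          simp only [hF, if_pos hy]
          rw [map_div₀, map_mul, Complex.conj_ofReal, Complex.conj_ofReal]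
          rw [show ((|y|:ℝ):ℂ) * (starRingEnd ℂ) (ψ y) / (cp:ℂ) * ψ y
            = ((|y|:ℝ):ℂ) * ((ψ y) * (starRingEnd ℂ) (ψ y)) / (cp:ℂ) by ring, hmc]
          push_cast
          ring
        · rw [hη₀]
          simp only [hF, if_neg hy]
          rw [map_div₀, map_mul, Complex.conj_ofReal, Complex.conj_ofReal]
          rw [show ((|y|:ℝ):ℂ) * (starRingEnd ℂ) (ψ y) / (cn:ℂ) * ψ y
            = ((|y|:ℝ):ℂ) * ((ψ y) * (starRingEnd ℂ) (ψ y)) / (cn:ℂ) by ring, hmc]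
          push_cast
          ring
      have hFmeas : Measurable F := by
        refine Measurable.ite (measurableSet_lt measurable_const measurable_id) ?_ ?_
        · exact Complex.measurable_ofReal.comp
            ((measurable_abs.mul (hψm.norm.pow_const 2)).div_const cp)
        · exact Complex.measurable_ofReal.comp
            ((measurable_abs.mul (hψm.norm.pow_const 2)).div_const cn)
      have hFint : Integrable F volume := by
        refine Integrable.mono' (hint.const_mul (cp⁻¹ + cn⁻¹)) hFmeas.aestronglyMeasurable
          (Filter.Eventually.of_forall fun y => ?_)
        have hb : (0:ℝ) ≤ |y| * ‖ψ y‖ ^ 2 := by positivity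
        have hkey : ∀ c : ℝ, 0 < c → c⁻¹ ≤ cp⁻¹ + cn⁻¹ →
            ‖((|y| * ‖ψ y‖ ^ 2 / c : ℝ) : ℂ)‖ ≤ (cp⁻¹ + cn⁻¹) * (|y| * ‖ψ y‖ ^ 2) := by
          intro c hc hle
          rw [Complex.norm_real, Real.norm_eq_abs,
            abs_of_nonneg (div_nonneg hb hc.le), div_eq_mul_inv, mul_comm]
          exact mul_le_mul_of_nonneg_right hle hb
        by_cases hy : 0 < y
        · simpa only [hF, if_pos hy] using hkey cp hcp0 (le_add_of_nonneg_right (by positivity))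
        · simpa only [hF, if_neg hy] using hkey cn hcn0 (le_add_of_nonneg_left (by positivity))
      rw [hptwise]
      have hsplit : ∫ y, F y = (∫ y in Set.Iio (0:ℝ), F y) + ∫ y in Set.Ioi (0:ℝ), F y := by
        rw [← integral_add_compl measurableSet_Iio hFint, Set.compl_Iio,
          integral_Ici_eq_integral_Ioi]
      have hIoi : ∫ y in Set.Ioi (0:ℝ), F y = ((Apos / cp : ℝ) : ℂ) := by
        rw [setIntegral_congr_fun (g := fun y : ℝ => ((y * ‖ψ y‖ ^ 2 / cp : ℝ) : ℂ))
          measurableSet_Ioi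
          (fun y hy => by
            simp only [hF, if_pos (show (0:ℝ) < y from hy), abs_of_pos (show (0:ℝ) < y from hy)])]
        have hco : ∫ x in Set.Ioi (0:ℝ), ((x * ‖ψ x‖ ^ 2 / cp : ℝ) : ℂ)
            = ((∫ x in Set.Ioi (0:ℝ), x * ‖ψ x‖ ^ 2 / cp : ℝ) : ℂ) := integral_ofReal
        rw [hco, integral_div, ← hApos]
      have hIio : ∫ y in Set.Iio (0:ℝ), F y = ((Aneg / cn : ℝ) : ℂ) := by
        rw [setIntegral_congr_fun (g := fun y : ℝ => ((|y| * ‖ψ y‖ ^ 2 / cn : ℝ) : ℂ))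
          measurableSet_Iio
          (fun y hy => by
            simp only [hF, if_neg (not_lt.2 (le_of_lt (show y < (0:ℝ) from hy)))])]
        have hco : ∫ x in Set.Iio (0:ℝ), ((|x| * ‖ψ x‖ ^ 2 / cn : ℝ) : ℂ)
            = ((∫ x in Set.Iio (0:ℝ), |x| * ‖ψ x‖ ^ 2 / cn : ℝ) : ℂ) := integral_ofReal
        rw [hco, integral_div, ← hAneg]
      rw [hsplit, hIoi, hIio, ← Complex.ofReal_add, Complex.norm_real, Real.norm_eq_abs,
        abs_of_nonneg (by positivity), hcp, hcn]
      have hap : Apos / Real.sqrt (Real.pi * Apos) = Real.sqrt Apos / Real.sqrt Real.pi := by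
        rw [Real.sqrt_mul Real.pi_pos.le]
        rw [show Apos / (Real.sqrt Real.pi * Real.sqrt Apos)
            = (Real.sqrt Apos * Real.sqrt Apos) / (Real.sqrt Real.pi * Real.sqrt Apos) by
          rw [Real.mul_self_sqrt hAp.le]]
        rw [mul_div_mul_right _ _ (ne_of_gt (Real.sqrt_pos.2 hAp))]
      have han : Aneg / Real.sqrt (Real.pi * Aneg) = Real.sqrt Aneg / Real.sqrt Real.pi := by
        rw [Real.sqrt_mul Real.pi_pos.le]
        rw [show Aneg / (Real.sqrt Real.pi * Real.sqrt Aneg)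
            = (Real.sqrt Aneg * Real.sqrt Aneg) / (Real.sqrt Real.pi * Real.sqrt Aneg) by
          rw [Real.mul_self_sqrt hAn.le]]
        rw [mul_div_mul_right _ _ (ne_of_gt (Real.sqrt_pos.2 hAn))]
      rw [hap, han, ← add_div, div_pow, Real.sq_sqrt Real.pi_pos.le, add_comm]
end

section
/- Let D be a bounded, positive, invertible operator on a complex Hilbert space H, and let ψ ∈ H be a unit vector. Then ⟨ψ, D ψ⟩ · ⟨ψ, D^{-1} ψ⟩ = 1 if and only if ψ is an eigenvector of D. -/
/-- If `D` is positive and `re ⟪v, D v⟫ = 0`, then `D v = 0`. -/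
lemma isPositive_inner_self_zero {H : Type*}
    [NormedAddCommGroup H] [InnerProductSpace ℂ H] [CompleteSpace H]
    (D : H →L[ℂ] H) (hD : D.IsPositive) (v : H)
    (hv : (inner ℂ v (D v) : ℂ).re = 0) : D v = 0 := by
  have hSym : ∀ a b : H, (inner ℂ (D a) b : ℂ) = inner ℂ a (D b) :=
    fun a b => hD.isSelfAdjoint.isSymmetric a b
  by_contra hne
  have hn : (0:ℝ) < ‖D v‖^2 := by
    have := norm_pos_iff.mpr hne
    positivity
  set C : ℝ := (inner ℂ (D v) (D (D v)) : ℂ).re with hC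
  have hC0 : 0 ≤ C := hD.re_inner_nonneg_right (D v)
  have key : ∀ t : ℝ, 0 ≤ C * t^2 + 2 * t * ‖D v‖^2 := by
    intro t
    have h0 : 0 ≤ (inner ℂ (v + (t:ℂ) • D v) (D (v + (t:ℂ) • D v)) : ℂ).re :=
      hD.re_inner_nonneg_right _
    have hsym2 : (inner ℂ v (D (D v)) : ℂ) = starRingEnd ℂ (inner ℂ (D v) (D v) : ℂ) := by
      rw [← hSym (D v) v, inner_conj_symm]
    have hxDv : (inner ℂ (D v) (D v) : ℂ) = ((‖D v‖^2 : ℝ) : ℂ) := by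
      rw [inner_self_eq_norm_sq_to_K]
      norm_cast
    have hexp : (inner ℂ (v + (t:ℂ) • D v) (D (v + (t:ℂ) • D v)) : ℂ)
        = inner ℂ v (D v) + (t:ℂ) * inner ℂ v (D (D v)) + (t:ℂ) * inner ℂ (D v) (D v)
          + (t:ℂ)^2 * inner ℂ (D v) (D (D v)) := by
      rw [map_add, map_smul]
      simp only [inner_add_left, inner_add_right, inner_smul_left, inner_smul_right,
        Complex.conj_ofReal]
      ring
    have hre : (inner ℂ (v + (t:ℂ) • D v) (D (v + (t:ℂ) • D v)) : ℂ).re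
        = C * t^2 + 2 * t * ‖D v‖^2 := by
      rw [hexp, hsym2, hxDv]
      simp only [Complex.add_re, Complex.mul_re, Complex.ofReal_re, Complex.ofReal_im,
        Complex.conj_re, Complex.conj_im, ← Complex.ofReal_pow, hv, hC]
      ring
    rw [hre] at h0
    exact h0
  set u : ℝ := ‖D v‖^2 / (C + 1) with hudef
  have hCp : (0:ℝ) < C + 1 := by linarith
  have hu : 0 < u := div_pos hn hCp
  have hun : u * (C + 1) = ‖D v‖^2 := div_mul_cancel₀ _ (ne_of_gt hCp)
  have h := key (-u)
  have h2 : u * (u * (C + 1)) = u * ‖D v‖^2 := by rw [hun]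
  nlinarith [mul_pos hu hu, mul_nonneg hC0 (mul_pos hu hu).le]

/-- For a bounded positive invertible operator `D` (with bounded inverse) on a complex
Hilbert space and a unit vector `ψ`: `⟨ψ, D ψ⟩ ⟨ψ, D⁻¹ ψ⟩ = 1` if and only if `ψ` is an
eigenvector of `D`. -/
theorem positive_operator_inverse_expectation_eq_iff_eigenvector {H : Type*}
    [NormedAddCommGroup H] [InnerProductSpace ℂ H] [CompleteSpace H]
    (D Dinv : H →L[ℂ] H) (hD : D.IsPositive)
    (hright : D ∘L Dinv = 1) (hleft : Dinv ∘L D = 1)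
    (ψ : H) (hψ : ‖ψ‖ = 1) :
    (inner ℂ ψ (D ψ) : ℂ).re * (inner ℂ ψ (Dinv ψ) : ℂ).re = 1 ↔ ∃ c : ℂ, D ψ = c • ψ := by
  have hSym : ∀ a b : H, (inner ℂ (D a) b : ℂ) = inner ℂ a (D b) :=
    fun a b => hD.isSelfAdjoint.isSymmetric a b
  have hψψ : (inner ℂ ψ ψ : ℂ) = 1 := by
    rw [inner_self_eq_norm_sq_to_K, hψ]; norm_num
  have hDφ : D (Dinv ψ) = ψ := by
    have := congrArg (fun T : H →L[ℂ] H => T ψ) hright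
    simpa using this
  have hφD : ∀ w, Dinv (D w) = w := by
    intro w
    have := congrArg (fun T : H →L[ℂ] H => T w) hleft
    simpa using this
  constructor
  · intro hprod
    set φ : H := Dinv ψ with hφ
    set a : ℝ := (inner ℂ ψ (D ψ) : ℂ).re with ha
    set b : ℝ := (inner ℂ ψ (Dinv ψ) : ℂ).re with hb
    have hb0 : b ≠ 0 := by
      intro h; rw [h, mul_zero] at hprod; norm_num at hprod
    -- ⟪φ, ψ⟫ is real, equal to b
    have hφψ : (inner ℂ φ ψ : ℂ) = (b : ℂ) := by
      have h1 : (inner ℂ φ ψ : ℂ) = inner ℂ φ (D φ) := by rw [hDφ]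
      have hreal : (inner ℂ φ (D φ) : ℂ) = starRingEnd ℂ (inner ℂ φ (D φ) : ℂ) := by
        rw [← hSym φ φ, inner_conj_symm]
        exact hSym φ φ
      have him : (inner ℂ φ ψ : ℂ).im = 0 := by
        have h2 := congrArg Complex.im h1
        have h3 := congrArg Complex.im hreal
        simp only [Complex.conj_im] at h3
        linarith [h2, h3]
      have hre : (inner ℂ φ ψ : ℂ).re = b := by
        have hcs : (inner ℂ φ ψ : ℂ) = starRingEnd ℂ (inner ℂ ψ φ : ℂ) :=
          (inner_conj_symm φ ψ).symm
        rw [hb, hcs, Complex.conj_re, ← hφ]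
      exact Complex.ext (by simpa using hre) (by simpa using him)
    have hψφc : (inner ℂ ψ φ : ℂ) = (b : ℂ) := by
      rw [← inner_conj_symm, hφψ]; simp
    -- v := b • ψ - φ satisfies re ⟪v, D v⟫ = 0
    set v : H := (b:ℂ) • ψ - φ with hv
    have hφDψ : (inner ℂ φ (D ψ) : ℂ) = 1 := by
      rw [← hSym φ ψ, hDφ, hψψ]
    have hinner : (inner ℂ v (D v) : ℂ) = (b:ℂ)^2 * inner ℂ ψ (D ψ) - (b:ℂ) := by
      rw [hv, map_sub, map_smul]
      simp only [inner_sub_left, inner_sub_right, inner_smul_left, inner_smul_right]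
      rw [hφDψ, hDφ, hψψ, hφψ]
      simp [Complex.conj_ofReal]
      ring
    have hre0 : (inner ℂ v (D v) : ℂ).re = 0 := by
      rw [hinner]
      have h1 : ((b:ℂ)^2 * inner ℂ ψ (D ψ) - (b:ℂ)).re = b^2 * a - b := by
        rw [Complex.sub_re, show ((b:ℂ)^2) = ((b^2 : ℝ) : ℂ) by push_cast; ring,
          Complex.re_ofReal_mul, ha, Complex.ofReal_re]
      rw [h1]
      linear_combination b * hprod
    have hDv : D v = 0 := isPositive_inner_self_zero D hD v hre0
    have hv0 : v = 0 := by
      have := hφD v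
      rw [hDv, map_zero] at this
      exact this.symm
    have hφeq : φ = (b:ℂ) • ψ := by
      have : (b:ℂ) • ψ - φ = 0 := hv0
      linear_combination (norm := module) -this
    refine ⟨(b:ℂ)⁻¹, ?_⟩
    have : ψ = D ((b:ℂ) • ψ) := by rw [← hφeq, hDφ]
    rw [map_smul] at this
    have hbC : (b:ℂ) ≠ 0 := by exact_mod_cast hb0
    conv_rhs => rw [this]
    rw [smul_smul, inv_mul_cancel₀ hbC, one_smul]
  · rintro ⟨c, hc⟩
    have hcψ : (inner ℂ ψ (D ψ) : ℂ) = c := by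
      rw [hc, inner_smul_right, hψψ, mul_one]
    -- c is real
    have hcreal : c.im = 0 := by
      have h1 : starRingEnd ℂ (inner ℂ ψ (D ψ) : ℂ) = inner ℂ ψ (D ψ) := by
        rw [inner_conj_symm]
        exact hSym ψ ψ
      rw [hcψ] at h1
      have := congrArg Complex.im h1
      simp only [Complex.conj_im] at this
      linarith
    have hc0 : c ≠ 0 := by
      intro h
      rw [h, zero_smul] at hc
      have : ψ = 0 := by
        have := hφD ψ
        rw [hc, map_zero] at this
        exact this.symm
      rw [this] at hψ
      simp at hψ
    have hDinv : Dinv ψ = c⁻¹ • ψ := by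
      have h1 : Dinv (D ψ) = ψ := hφD ψ
      rw [hc, map_smul] at h1
      have := congrArg (fun w => c⁻¹ • w) h1
      simpa [smul_smul, inv_mul_cancel₀ hc0] using this
    have hcinv : (inner ℂ ψ (Dinv ψ) : ℂ) = c⁻¹ := by
      rw [hDinv, inner_smul_right, hψψ, mul_one]
    rw [hcψ, hcinv]
    have hcr : c = (c.re : ℂ) := Complex.ext rfl (by simp [hcreal])
    have hcre0 : c.re ≠ 0 := by
      intro h
      apply hc0
      rw [hcr, h]; simp
    rw [hcr]
    rw [show ((c.re : ℂ))⁻¹ = ((c.re⁻¹ : ℝ) : ℂ) by push_cast; ring]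
    simp [mul_inv_cancel₀ hcre0]
end

section
/- Let G be a compact topological group with normalized Haar probability measure μ, let H be a finite-dimensional complex inner product space, let U : G → U(H) be a continuous unitary representation, and let ρ be a positive operator on H with trace 1 (a density matrix). Suppose ξ is a positive operator with ∫_G U_g ξ U_g† dμ(g) = 1 (identity) that maximizes the likelihood, i.e., Tr[ξ ρ] ≥ Tr[ξ' ρ] for every positive operator ξ' satisfying ∫_G U_g ξ' U_g† dμ(g) = 1. Then for all g, ĝ ∈ G, the probability density p(ĝ|g) := Tr[U_ĝ ξ U_ĝ† · U_g ρ U_g†] satisfies p(ĝ|g) ≤ p(g|g) = Tr[ξ ρ]; that is, the probability distribution of the estimate attains its maximum at the true value. -/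
open MeasureTheory ContinuousLinearMap

/-- For a compact (hence unimodular) group, the probability distribution of a
maximum-likelihood covariant POVM attains its maximum at the true value: if the seed
`ξ ≥ 0` is normalized and maximizes `Tr[ξρ]` among all normalized positive seeds, then
`p(ghat|g) = Tr[U_ghat ξ U_ghat† U_g ρ U_g†] ≤ p(g|g) = Tr[ξρ]` for all `g, ghat`. -/
theorem most_likely_value_eq_true_value_unimodular
    {G : Type*} [Group G] [TopologicalSpace G] [IsTopologicalGroup G] [CompactSpace G]
    [MeasurableSpace G] [BorelSpace G]
    {H : Type*} [NormedAddCommGroup H] [InnerProductSpace ℂ H] [FiniteDimensional ℂ H]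
    (μ : Measure G) [μ.IsHaarMeasure] [IsProbabilityMeasure μ]
    (U : G → (H →L[ℂ] H)) (hUcont : Continuous U)
    (hUunit : ∀ g, adjoint (U g) ∘L U g = 1 ∧ U g ∘L adjoint (U g) = 1)
    (hUmul : ∀ g g', U (g * g') = U g ∘L U g')
    (ρ : H →L[ℂ] H) (hρ : ρ.IsPositive)
    (hρtr : LinearMap.trace ℂ H (ρ : H →ₗ[ℂ] H) = 1)
    (ξ : H →L[ℂ] H) (hξ : ξ.IsPositive)
    (hξnorm : (∫ g, U g ∘L ξ ∘L adjoint (U g) ∂μ) = 1)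
    (hξopt : ∀ ξ' : H →L[ℂ] H, ξ'.IsPositive →
      (∫ g, U g ∘L ξ' ∘L adjoint (U g) ∂μ) = 1 →
      (LinearMap.trace ℂ H ((ξ' ∘L ρ) : H →ₗ[ℂ] H)).re ≤
        (LinearMap.trace ℂ H ((ξ ∘L ρ) : H →ₗ[ℂ] H)).re)
    (g ghat : G) :
    (LinearMap.trace ℂ H
        (((U ghat ∘L ξ ∘L adjoint (U ghat)) ∘L (U g ∘L ρ ∘L adjoint (U g))) : H →ₗ[ℂ] H)).re ≤
      (LinearMap.trace ℂ H ((ξ ∘L ρ) : H →ₗ[ℂ] H)).re ∧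
    (LinearMap.trace ℂ H
        (((U g ∘L ξ ∘L adjoint (U g)) ∘L (U g ∘L ρ ∘L adjoint (U g))) : H →ₗ[ℂ] H)).re =
      (LinearMap.trace ℂ H ((ξ ∘L ρ) : H →ₗ[ℂ] H)).re := by
  -- Haar measure on a compact group is right invariant (unimodularity)
  have hright : μ.IsMulRightInvariant := by
    constructor
    intro g0
    have : IsProbabilityMeasure (μ.map (· * g0)) :=
      Measure.isProbabilityMeasure_map (measurable_mul_const g0).aemeasurable
    exact Measure.isHaarMeasure_eq_of_isProbabilityMeasure _ μ
  -- U 1 = 1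
  have hU1 : U 1 = 1 := by
    have h1 : U 1 = U 1 ∘L U 1 := by rw [← hUmul]; simp
    have e1 : U 1 = (adjoint (U 1) ∘L U 1) ∘L U 1 := by
      rw [(hUunit 1).1, ContinuousLinearMap.one_def, id_comp]
    rw [e1, comp_assoc, ← h1, (hUunit 1).1]
  -- adjoint (U g) = U g⁻¹
  have hadj : ∀ a : G, adjoint (U a) = U a⁻¹ := by
    intro a
    have h2 : U a ∘L U a⁻¹ = 1 := by rw [← hUmul]; simp [hU1]
    have e2 : adjoint (U a) = adjoint (U a) ∘L (U a ∘L U a⁻¹) := by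
      rw [h2, ContinuousLinearMap.one_def, comp_id]
    rw [e2, ← comp_assoc, (hUunit a).1, ContinuousLinearMap.one_def, id_comp]
  set h : G := g⁻¹ * ghat with hh
  set ξ' : H →L[ℂ] H := U h ∘L ξ ∘L adjoint (U h) with hξ'
  -- key trace identity
  have keytr : ∀ a : G,
      ((U (g * a) ∘L ξ ∘L adjoint (U (g * a))) ∘L (U g ∘L ρ ∘L adjoint (U g)))
        = U g ∘L (((U a ∘L ξ ∘L adjoint (U a)) ∘L ρ) ∘L adjoint (U g)) := by
    intro a
    have : adjoint (U (g * a)) ∘L U g = adjoint (U a) := by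
      rw [hadj, hadj, ← hUmul]
      congr 1
      group
    have h3 : ∀ y : H, adjoint (U g) ((U g) y) = y := by
      intro y
      have := DFunLike.congr_fun (hUunit g).1 y
      simpa using this
    rw [hUmul g a]
    ext x
    simp [this, h3, comp_assoc]
  -- trace of U g ∘L B ∘L adjoint (U g) equals trace of B
  have trconj : ∀ (B : H →L[ℂ] H),
      LinearMap.trace ℂ H ((U g ∘L (B ∘L adjoint (U g))) : H →ₗ[ℂ] H)
        = LinearMap.trace ℂ H (B : H →ₗ[ℂ] H) := by
    intro B
    have : ((U g ∘L (B ∘L adjoint (U g))) : H →ₗ[ℂ] H)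
        = ((U g : H →ₗ[ℂ] H) * ((B ∘L adjoint (U g)) : H →ₗ[ℂ] H)) := rfl
    rw [this, LinearMap.trace_mul_comm]
    have : (((B ∘L adjoint (U g)) : H →ₗ[ℂ] H) * (U g : H →ₗ[ℂ] H))
        = (((B ∘L adjoint (U g)) ∘L U g : H →L[ℂ] H) : H →ₗ[ℂ] H) := rfl
    rw [this]
    congr 1
    rw [comp_assoc, (hUunit g).1]
    ext x; simp
  -- positivity of ξ'
  have hξ'pos : ξ'.IsPositive := hξ.conj_adjoint (U h)
  -- normalization of ξ'
  have hξ'norm : (∫ a, U a ∘L ξ' ∘L adjoint (U a) ∂μ) = 1 := by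
    have heq : ∀ a : G, U a ∘L ξ' ∘L adjoint (U a)
        = U (a * h) ∘L ξ ∘L adjoint (U (a * h)) := by
      intro a
      rw [hξ', hUmul a h, adjoint_comp]
      ext x; simp [comp_assoc]
    simp_rw [heq]
    rw [MeasureTheory.integral_mul_right_eq_self (fun a => U a ∘L ξ ∘L adjoint (U a)) h]
    exact hξnorm
  -- likelihood for ξ' is p(ghat|g)
  have hlik : (LinearMap.trace ℂ H ((ξ' ∘L ρ) : H →ₗ[ℂ] H))
      = LinearMap.trace ℂ H
        (((U ghat ∘L ξ ∘L adjoint (U ghat)) ∘L (U g ∘L ρ ∘L adjoint (U g))) : H →ₗ[ℂ] H) := by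
    have hg : g * h = ghat := by rw [hh]; group
    rw [← hg, keytr h, trconj (((U h ∘L ξ ∘L adjoint (U h)) ∘L ρ))]
  constructor
  · rw [← hlik]
    exact hξopt ξ' hξ'pos hξ'norm
  · have h1' : g * (1 : G) = g := mul_one g
    have := keytr 1
    rw [h1'] at this
    rw [this, trconj, hU1]
    congr 2
    rw [ContinuousLinearMap.one_def, adjoint_id]
    ext x; simp
end

section
/- Let ψ ∈ L²((0,∞), ℂ) be a unit vector with N₁ := ∫₀^∞ y |ψ(y)|² dy < ∞ and N₂ := ∫₀^∞ y² |ψ(y)|² dy < ∞, N₁ > 0, and let η(y) = y ψ(y)/√(π N₁) be the seed of the optimal maximum-likelihood covariant POVM. Then the probability density p(x, r) = |⟨η, V_{x,r} ψ⟩|² satisfies p(0,0) = N₁/π and the uniform bound p(x, r) ≤ N₂/(π N₁) for all (x, r) ∈ ℝ². (Since N₂/N₁ ≥ N₁ by the Cauchy–Schwarz inequality, the value of the density at the true parameters need not be the global maximum: for nonunimodular groups the most likely value can differ from the true one.) -/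
open MeasureTheory

/-- For the optimal maximum-likelihood covariant POVM with seed
`η(y) = y ψ(y)/√(π N₁)` on a unit state `ψ ∈ L²((0,∞), ℂ)` with
`N₁ = ∫ y|ψ|² < ∞`, `N₂ = ∫ y²|ψ|² < ∞`, the probability density
`p(x,r) = |⟨η, V_{x,r} ψ⟩|²` satisfies `p(0,0) = N₁/π` and the uniform bound
`p(x,r) ≤ N₂/(π N₁)` (so the density at the true value need not be the global
maximum, since `N₂/N₁ ≥ N₁`). -/
theorem true_value_density_and_uniform_bound
    (V : ℝ × ℝ →
      (Lp ℂ 2 ((volume : Measure ℝ).restrict (Set.Ioi 0)) ≃ₗᵢ[ℂ]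
        Lp ℂ 2 ((volume : Measure ℝ).restrict (Set.Ioi 0))))
    (hV : ∀ (p : ℝ × ℝ) (f : Lp ℂ 2 ((volume : Measure ℝ).restrict (Set.Ioi 0))),
      ⇑(V p f) =ᵐ[(volume : Measure ℝ).restrict (Set.Ioi 0)]
        fun y => (Real.exp (p.2 / 2) : ℂ) *
          Complex.exp (-2 * Complex.I * (p.1 : ℂ) * (y : ℂ)) * f (Real.exp p.2 * y))
    (ψ : Lp ℂ 2 ((volume : Measure ℝ).restrict (Set.Ioi 0))) (hψ : ‖ψ‖ = 1)
    (N₁ N₂ : ℝ)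
    (hN₁ : N₁ = ∫ y in Set.Ioi (0 : ℝ), y * ‖ψ y‖ ^ 2)
    (hN₁fin : Integrable (fun y => y * ‖ψ y‖ ^ 2) ((volume : Measure ℝ).restrict (Set.Ioi 0)))
    (hN₂ : N₂ = ∫ y in Set.Ioi (0 : ℝ), y ^ 2 * ‖ψ y‖ ^ 2)
    (hN₂fin : Integrable (fun y => y ^ 2 * ‖ψ y‖ ^ 2) ((volume : Measure ℝ).restrict (Set.Ioi 0)))
    (hN₁pos : 0 < N₁)
    (η : Lp ℂ 2 ((volume : Measure ℝ).restrict (Set.Ioi 0)))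
    (hη : ⇑η =ᵐ[(volume : Measure ℝ).restrict (Set.Ioi 0)]
      fun y => (y : ℂ) * ψ y / (Real.sqrt (Real.pi * N₁) : ℂ)) :
    ‖(inner ℂ η ψ : ℂ)‖ ^ 2 = N₁ / Real.pi ∧
    ∀ p : ℝ × ℝ, ‖(inner ℂ η (V p ψ) : ℂ)‖ ^ 2 ≤ N₂ / (Real.pi * N₁) := by
  have hπ : (0:ℝ) < Real.pi * N₁ := by positivity
  have hc : Real.sqrt (Real.pi * N₁) ≠ 0 := by positivity
  have hc2 : Real.sqrt (Real.pi * N₁) ^ 2 = Real.pi * N₁ := Real.sq_sqrt hπ.le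
  -- inner η ψ
  have hinner : (inner ℂ η ψ : ℂ) = ((N₁ / Real.sqrt (Real.pi * N₁) : ℝ) : ℂ) := by
    rw [MeasureTheory.L2.inner_def]
    have h1 : ∀ᵐ y ∂((volume : Measure ℝ).restrict (Set.Ioi 0)),
        (inner ℂ (η y) (ψ y) : ℂ) =
          ((y * ‖ψ y‖ ^ 2 / Real.sqrt (Real.pi * N₁) : ℝ) : ℂ) := by
      filter_upwards [hη] with y hy
      rw [RCLike.inner_apply', hy, map_div₀, map_mul, Complex.conj_ofReal,
        Complex.conj_ofReal, div_mul_eq_mul_div, mul_assoc,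
        ← Complex.normSq_eq_conj_mul_self, Complex.normSq_eq_norm_sq]
      push_cast
      ring
    rw [integral_congr_ae h1]
    have hio : ∫ a in Set.Ioi (0:ℝ),
        ((a * ‖ψ a‖ ^ 2 / Real.sqrt (Real.pi * N₁) : ℝ) : ℂ) =
        ((∫ a in Set.Ioi (0:ℝ), a * ‖ψ a‖ ^ 2 / Real.sqrt (Real.pi * N₁) : ℝ) : ℂ) :=
      integral_ofReal
    rw [hio]
    norm_cast
    rw [integral_div, ← hN₁]
  have hηnorm : ‖η‖ ^ 2 = N₂ / (Real.pi * N₁) := by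
    have hself : (inner ℂ η η : ℂ) = ((N₂ / (Real.pi * N₁) : ℝ) : ℂ) := by
      rw [MeasureTheory.L2.inner_def]
      have h1 : ∀ᵐ y ∂((volume : Measure ℝ).restrict (Set.Ioi 0)),
          (inner ℂ (η y) (η y) : ℂ) =
            ((y ^ 2 * ‖ψ y‖ ^ 2 / (Real.pi * N₁) : ℝ) : ℂ) := by
        filter_upwards [hη] with y hy
        rw [RCLike.inner_apply', hy, map_div₀, map_mul, Complex.conj_ofReal,
          Complex.conj_ofReal, div_mul_div_comm, mul_mul_mul_comm,
          ← Complex.normSq_eq_conj_mul_self, Complex.normSq_eq_norm_sq]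
        conv_rhs => rw [← hc2]
        push_cast
        ring
      rw [integral_congr_ae h1]
      have hio : ∫ a in Set.Ioi (0:ℝ),
          ((a ^ 2 * ‖ψ a‖ ^ 2 / (Real.pi * N₁) : ℝ) : ℂ) =
          ((∫ a in Set.Ioi (0:ℝ), a ^ 2 * ‖ψ a‖ ^ 2 / (Real.pi * N₁) : ℝ) : ℂ) :=
        integral_ofReal
      rw [hio]
      norm_cast
      rw [integral_div, ← hN₂]
    rw [← inner_self_eq_norm_sq (𝕜 := ℂ) η, hself]
    exact RCLike.ofReal_re _
  constructor
  · rw [hinner]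
    rw [Complex.norm_real, Real.norm_eq_abs, sq_abs, div_pow, hc2]
    rw [sq]
    field_simp
  · intro p
    have hcs : ‖(inner ℂ η (V p ψ) : ℂ)‖ ≤ ‖η‖ * ‖V p ψ‖ := norm_inner_le_norm η (V p ψ)
    rw [(V p).norm_map, hψ, mul_one] at hcs
    calc ‖(inner ℂ η (V p ψ) : ℂ)‖ ^ 2 ≤ ‖η‖ ^ 2 :=
          pow_le_pow_left₀ (norm_nonneg _) hcs 2
      _ = N₂ / (Real.pi * N₁) := hηnorm
end
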